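/- arXiv:2312.11182 — 3 statements merged into one kernel-verified Lean document; each statement's English description precedes it below -/
import Mathlib

section
/- Let A be a linear operator on ℝ^d leaving a closed, solid, pointed convex cone K invariant, and suppose not all eigenvalues of A have the same modulus. Let ρ₂ < ρ(A) be the second largest modulus of eigenvalues of A, and let V be the subspace of vectors x with ‖A^j x‖ ≤ C j^r ρ₂^j for some constants. Then V does not intersect the interior of K. -/
/-!
A closed pointed cone is normal: `c * ‖u‖ ≤ ‖u + v‖` for `u, v ∈ K`, by compactness of
`K ∩ sphere 0 1` and `-u ∉ K`. If `x` is interior to `K`, then `x ± r • y ∈ K` for unit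
vectors `y`, and normality turns this into `‖B‖ ≤ M * ‖B x‖` for every `B` with `B K ⊆ K`,
with `M` independent of `B`. For `B = A ^ j` this says `‖A ^ j x‖` grows at least at the
rate `specRad A > ρ₂`, so `x ∉ V`.
-/

open Filter

/-- Spectral radius of a continuous linear operator, via the Gelfand formula. -/
noncomputable def specRad {F : Type*} [NormedAddCommGroup F] [NormedSpace ℝ F]
    (B : F →L[ℝ] F) : ℝ :=
  Filter.atTop.limsup fun j : ℕ => ‖B ^ j‖ ^ ((j : ℝ)⁻¹)

variable {E : Type*} [NormedAddCommGroup E] [NormedSpace ℝ E] {K : Set E}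

theorem exists_pos_mul_norm_le_norm_add [ProperSpace E] (hK : IsClosed K)
    (hsmul : ∀ x ∈ K, ∀ t : ℝ, 0 < t → t • x ∈ K) (hpointed : ∀ x ∈ K, -x ∈ K → x = 0) :
    ∃ c > 0, ∀ u ∈ K, ∀ v ∈ K, c * ‖u‖ ≤ ‖u + v‖ := by
  obtain ⟨c, hc, hcK⟩ : ∃ c > 0, ∀ u ∈ K ∩ Metric.sphere 0 1, c ≤ Metric.infDist (-u) K := by
    refine ((isCompact_sphere 0 1).inter_left hK).exists_forall_le'
      ((Metric.continuous_infDist_pt K).comp continuous_neg).continuousOn ?_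
    rintro u ⟨huK, hu⟩
    refine (hK.notMem_iff_infDist_pos ⟨u, huK⟩).1 fun hneg => ?_
    simp [hpointed u huK hneg] at hu
  refine ⟨c, hc, fun u hu v hv => ?_⟩
  rcases eq_or_ne u 0 with rfl | hu0
  · simp
  have hn : 0 < ‖u‖ := norm_pos_iff.2 hu0
  have hscale : Metric.infDist (-(‖u‖⁻¹ • u)) K ≤ ‖u‖⁻¹ * ‖u + v‖ :=
    calc _ ≤ dist (-(‖u‖⁻¹ • u)) (‖u‖⁻¹ • v) :=
          Metric.infDist_le_dist_of_mem (hsmul v hv _ (inv_pos.2 hn))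
      _ = ‖u‖⁻¹ * ‖u + v‖ := by
          rw [dist_eq_norm, ← neg_add', ← smul_add, norm_neg, norm_smul, norm_inv, norm_norm]
  have := (hcK (‖u‖⁻¹ • u) ⟨hsmul u hu _ (inv_pos.2 hn), by simp [norm_smul, hn.ne']⟩).trans
    hscale
  rwa [← div_eq_inv_mul, le_div_iff₀ hn] at this

theorem norm_le_of_add_mem_of_sub_mem {c : ℝ} (hc : 0 < c)
    (hcK : ∀ u ∈ K, ∀ v ∈ K, c * ‖u‖ ≤ ‖u + v‖) {x y : E} (hadd : x + y ∈ K)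
    (hsub : x - y ∈ K) : ‖y‖ ≤ (2 / c + 1) * ‖x‖ := by
  have hsum : c * ‖x + y‖ ≤ 2 * ‖x‖ := by
    simpa [← two_smul ℝ x, norm_smul] using hcK _ hadd _ hsub
  calc ‖y‖ = ‖(x + y) - x‖ := by rw [add_sub_cancel_left]
    _ ≤ ‖x + y‖ + ‖x‖ := norm_sub_le _ _
    _ ≤ 2 / c * ‖x‖ + ‖x‖ := by
        gcongr
        rwa [div_mul_eq_mul_div, le_div_iff₀' hc]
    _ = (2 / c + 1) * ‖x‖ := by ring

theorem exists_opNorm_le_mul_norm_apply [ProperSpace E] (hK : IsClosed K)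
    (hsmul : ∀ x ∈ K, ∀ t : ℝ, 0 < t → t • x ∈ K) (hpointed : ∀ x ∈ K, -x ∈ K → x = 0)
    {x₀ : E} (hx₀ : x₀ ∈ interior K) :
    ∃ M > 0, ∀ B : E →L[ℝ] E, Set.MapsTo B K K → ‖B‖ ≤ M * ‖B x₀‖ := by
  obtain ⟨c, hc, hcK⟩ := exists_pos_mul_norm_le_norm_add hK hsmul hpointed
  obtain ⟨r, hr, hball⟩ :=
    Metric.nhds_basis_closedBall.mem_iff.1 (mem_interior_iff_mem_nhds.1 hx₀)
  refine ⟨(2 / c + 1) / r, by positivity, fun B hB => ?_⟩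
  refine ContinuousLinearMap.opNorm_le_of_unit_norm (by positivity) fun y hy => ?_
  have hmem : ∀ z : E, ‖z‖ ≤ r → x₀ + z ∈ K := fun z hz =>
    hball (by rwa [Metric.mem_closedBall, dist_self_add_left])
  have hbound := norm_le_of_add_mem_of_sub_mem hc hcK (x := B x₀) (y := B (r • y))
    (by simpa using hB (hmem (r • y) (by simp [norm_smul, hy, abs_of_pos hr])))
    (by simpa [sub_eq_add_neg] using
      hB (hmem (-(r • y)) (by simp [norm_smul, hy, abs_of_pos hr])))
  rw [map_smul, norm_smul, Real.norm_of_nonneg hr.le] at hbound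
  rw [div_mul_eq_mul_div, le_div_iff₀ hr]
  linarith

theorem limsup_rpow_inv_le_of_le_const_mul {a b : ℕ → ℝ} {M : ℝ} (hM : 0 < M) (ha : 0 ≤ a)
    (hab : ∀ j, a j ≤ M * b j)
    (hb : IsBoundedUnder (· ≤ ·) atTop fun j : ℕ => b j ^ (j : ℝ)⁻¹) :
    limsup (fun j : ℕ => a j ^ (j : ℝ)⁻¹) atTop ≤ limsup (fun j : ℕ => b j ^ (j : ℝ)⁻¹) atTop := by
  refine le_of_forall_gt_imp_ge_of_dense fun ρ hρ => ?_
  have hlim : Tendsto (fun j : ℕ => M ^ (j : ℝ)⁻¹ * ρ) atTop (nhds ρ) := by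
    have := ((Real.continuousAt_const_rpow hM.ne').tendsto.comp
      (tendsto_inv_atTop_zero.comp tendsto_natCast_atTop_atTop)).mul_const ρ
    simpa [Function.comp_def] using this
  have hle : ∀ᶠ j : ℕ in atTop, a j ^ (j : ℝ)⁻¹ ≤ M ^ (j : ℝ)⁻¹ * ρ := by
    filter_upwards [eventually_lt_of_limsup_lt hρ hb] with j hj
    have hbj : 0 ≤ b j := nonneg_of_mul_nonneg_right ((ha j).trans (hab j)) hM
    calc a j ^ (j : ℝ)⁻¹ ≤ (M * b j) ^ (j : ℝ)⁻¹ := by gcongr; exacts [ha j, hab j]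
      _ = M ^ (j : ℝ)⁻¹ * b j ^ (j : ℝ)⁻¹ := Real.mul_rpow hM.le hbj
      _ ≤ M ^ (j : ℝ)⁻¹ * ρ := by gcongr
  calc limsup (fun j : ℕ => a j ^ (j : ℝ)⁻¹) atTop
      ≤ limsup (fun j : ℕ => M ^ (j : ℝ)⁻¹ * ρ) atTop :=
        limsup_le_limsup hle
          (isBoundedUnder_of ⟨0, fun j => Real.rpow_nonneg (ha j) _⟩).isCoboundedUnder_le
          hlim.isBoundedUnder_le
    _ = ρ := hlim.limsup_eq

theorem isBoundedUnder_norm_pow_apply_rpow_inv (B : E →L[ℝ] E) (x : E) :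
    IsBoundedUnder (· ≤ ·) atTop fun j : ℕ => ‖(B ^ j) x‖ ^ (j : ℝ)⁻¹ := by
  refine isBoundedUnder_of ⟨max 1 ‖B‖ * max 1 ‖x‖, fun j => ?_⟩
  rcases Nat.eq_zero_or_pos j with rfl | hj
  · simpa using one_le_mul_of_one_le_of_one_le (le_max_left 1 ‖B‖) (le_max_left 1 ‖x‖)
  have hpow : ‖(B ^ j) x‖ ≤ (max 1 ‖B‖ * max 1 ‖x‖) ^ j :=
    calc ‖(B ^ j) x‖ ≤ ‖B‖ ^ j * ‖x‖ :=
          ((B ^ j).le_opNorm x).trans (by gcongr; exact norm_pow_le' B hj)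
      _ ≤ max 1 ‖B‖ ^ j * max 1 ‖x‖ ^ j := by
          gcongr
          · exact le_max_right _ _
          · exact (le_max_right _ _).trans (le_self_pow₀ (le_max_left _ _) hj.ne')
      _ = (max 1 ‖B‖ * max 1 ‖x‖) ^ j := (mul_pow _ _ _).symm
  calc ‖(B ^ j) x‖ ^ (j : ℝ)⁻¹ ≤ ((max 1 ‖B‖ * max 1 ‖x‖) ^ j) ^ (j : ℝ)⁻¹ := by gcongr
    _ = max 1 ‖B‖ * max 1 ‖x‖ := Real.pow_rpow_inv_natCast (by positivity) hj.ne'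

theorem specRad_le_limsup_norm_pow_apply (B : E →L[ℝ] E) (x : E) {M : ℝ} (hM : 0 < M)
    (h : ∀ j : ℕ, ‖B ^ j‖ ≤ M * ‖(B ^ j) x‖) :
    specRad B ≤ limsup (fun j : ℕ => ‖(B ^ j) x‖ ^ (j : ℝ)⁻¹) atTop :=
  limsup_rpow_inv_le_of_le_const_mul hM (fun _ => norm_nonneg _) h
    (isBoundedUnder_norm_pow_apply_rpow_inv B x)

theorem stmt0_general {d : ℕ} (A : EuclideanSpace ℝ (Fin d) →L[ℝ] EuclideanSpace ℝ (Fin d))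
    (K : Set (EuclideanSpace ℝ (Fin d)))
    (hKclosed : IsClosed K)
    (hKsmul : ∀ x ∈ K, ∀ t : ℝ, 0 < t → t • x ∈ K)
    (hKpointed : ∀ x ∈ K, -x ∈ K → x = 0)
    (hKinv : ∀ x ∈ K, A x ∈ K)
    (ρ₂ : ℝ) (hρ₂ : ρ₂ < specRad A)
    (V : Set (EuclideanSpace ℝ (Fin d)))
    (hV : V = {x | Filter.atTop.limsup (fun j : ℕ => ‖(A ^ j) x‖ ^ ((j : ℝ)⁻¹)) ≤ ρ₂}) :
    V ∩ interior K = ∅ := by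
  refine Set.eq_empty_of_forall_notMem fun x ⟨hxV, hxK⟩ => ?_
  rw [hV, Set.mem_ofPred_eq] at hxV
  obtain ⟨M, hM, hnorm⟩ := exists_opNorm_le_mul_norm_apply hKclosed hKsmul hKpointed hxK
  have hpow (j : ℕ) : Set.MapsTo (A ^ j) K K := by
    rw [FunLike.coe_pow_eq_iterate]
    exact Set.MapsTo.iterate hKinv j
  have := specRad_le_limsup_norm_pow_apply A x hM fun j => hnorm _ (hpow j)
  linarith

/-- if `A` leaves a closed solid pointed convex cone `K` invariant,
`ρ₂ < ρ(A)`, and `V = {x : limsup ‖A^j x‖^{1/j} ≤ ρ₂}`, then `V` does not meet the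
interior of `K`. -/
theorem stmt0 {d : ℕ} (A : EuclideanSpace ℝ (Fin d) →L[ℝ] EuclideanSpace ℝ (Fin d))
    (K : Set (EuclideanSpace ℝ (Fin d)))
    (hKclosed : IsClosed K)
    (hKadd : ∀ x ∈ K, ∀ y ∈ K, x + y ∈ K)
    (hKsmul : ∀ x ∈ K, ∀ t : ℝ, 0 < t → t • x ∈ K)
    (hKsolid : (interior K).Nonempty)
    (hKpointed : ∀ x ∈ K, -x ∈ K → x = 0)
    (hKinv : ∀ x ∈ K, A x ∈ K)
    (ρ₂ : ℝ) (hρ₂ : ρ₂ < specRad A)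
    (V : Set (EuclideanSpace ℝ (Fin d)))
    (hV : V = {x | Filter.atTop.limsup (fun j : ℕ => ‖(A ^ j) x‖ ^ ((j : ℝ)⁻¹)) ≤ ρ₂}) :
    V ∩ interior K = ∅ :=
  stmt0_general A K hKclosed hKsmul hKpointed hKinv ρ₂ hρ₂ V hV
end

section
/- With 𝒫 the space of real trigonometric polynomials with frequencies in a finite symmetric set Ω ⊂ ℤ^n containing 0, every face L of the cone 𝒫₊ of nonnegative polynomials has the form L = {p ∈ 𝒫₊ : p(ξ) = 0 for all ξ ∈ S} for a suitable compact subset S of the torus 𝕋^n. -/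
open scoped Real

/-- Evaluation of the trigonometric polynomial with coefficients `c` supported on `Ω`. -/
noncomputable def trigEval {n : ℕ} (Ω : Finset (Fin n → ℤ)) (c : {k // k ∈ Ω} → ℝ)
    (ξ : Fin n → ℝ) : ℂ :=
  ∑ k : {k // k ∈ Ω}, (c k : ℂ) *
    Complex.exp (2 * (Real.pi : ℂ) * Complex.I * (∑ i, ((k : Fin n → ℤ) i : ℝ) * ξ i))

/-- Symmetry of the coefficients: `p_{-k} = p_k`. -/
def SymCoeff {n : ℕ} (Ω : Finset (Fin n → ℤ)) (c : {k // k ∈ Ω} → ℝ) : Prop :=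
  ∀ (k : Fin n → ℤ) (hk : k ∈ Ω) (hk' : -k ∈ Ω), c ⟨-k, hk'⟩ = c ⟨k, hk⟩

/-- The cone of (coefficient vectors of) pointwise nonnegative real trigonometric
polynomials with spectrum in `Ω`. -/
def posTrigCone {n : ℕ} (Ω : Finset (Fin n → ℤ)) : Set ({k // k ∈ Ω} → ℝ) :=
  {c | SymCoeff Ω c ∧ ∀ ξ : Fin n → ℝ, (trigEval Ω c ξ).im = 0 ∧ 0 ≤ (trigEval Ω c ξ).re}

/-!
A nonnegative functional `f` on the cone, precomposed with the symmetrization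
`c ↦ (c + c ∘ neg) / 2`, is represented by a vector `v` that pairs nonnegatively with every
coefficient vector whose real part is nonnegative on the torus. By Farkas' lemma `v` lies in the
cone spanned by the evaluation vectors `(cos 2π⟨k, ξ⟩)ₖ`, which is closed because these vectors
form a compact set in the affine hyperplane where the coordinate `k = 0` equals `1`; by
Carathéodory `v` is then a positive combination of finitely many of them. Hence
`f p = ∑ μᵢ p(ξᵢ)` with `μᵢ > 0` on the cone, and the face `f = 0` is cut out by vanishing on the
finite set `{ξᵢ}`.
-/

open Set
open scoped RealInnerProductSpace Pointwise

theorem isCompact_convexHull {E : Type*} [AddCommGroup E] [Module ℝ E] [TopologicalSpace E]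
    [IsTopologicalAddGroup E] [ContinuousSMul ℝ E] [FiniteDimensional ℝ E] {s : Set E}
    (hs : IsCompact s) : IsCompact (convexHull ℝ s) := by
  -- By Carathéodory, `finrank ℝ E + 1` points suffice.
  have hunion : convexHull ℝ s = ⋃ m ∈ Finset.range (Module.finrank ℝ E + 2),
      (fun q : (Fin m → ℝ) × (Fin m → E) => ∑ i, q.1 i • q.2 i) ''
        (stdSimplex ℝ (Fin m) ×ˢ univ.pi fun _ => s) := by
    refine Subset.antisymm (fun x hx => ?_) ?_
    · obtain ⟨ι, _, z, w, hzs, hz, hw, hw1, rfl⟩ := eq_pos_convex_span_of_mem_convexHull hx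
      have hcard : Fintype.card ι < Module.finrank ℝ E + 2 :=
        Nat.lt_succ_of_le (hz.card_le_finrank_succ.trans (by gcongr; exact Submodule.finrank_le _))
      let e := (Fintype.equivFin ι).symm
      refine mem_biUnion (Finset.mem_range.2 hcard) ⟨(w ∘ e, z ∘ e), ⟨⟨fun i => (hw _).le, ?_⟩,
        fun i _ => hzs (mem_range_self _)⟩, e.sum_comp fun i => w i • z i⟩
      simpa only [Function.comp_apply] using (e.sum_comp w).trans hw1
    · simp only [iUnion_subset_iff]
      rintro m - _ ⟨⟨w, z⟩, ⟨⟨hw, hw1⟩, hz⟩, rfl⟩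
      exact mem_convexHull_of_exists_fintype w z hw hw1 (fun i => hz i (mem_univ i)) rfl
  rw [hunion]
  exact (Finset.range _).isCompact_biUnion fun m _ =>
    ((isCompact_stdSimplex ℝ (Fin m)).prod (isCompact_univ_pi fun _ => hs)).image (by fun_prop)

theorem IsCompact.isClosed_Ici_smul {E : Type*} [AddCommGroup E] [Module ℝ E] [TopologicalSpace E]
    [ContinuousSMul ℝ E] [T2Space E] {K : Set E} (hK : IsCompact K) (ℓ : E →L[ℝ] ℝ)
    (hℓ : ∀ x ∈ K, ℓ x = 1) : IsClosed (Ici (0 : ℝ) • K) := by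
  have : CompactSpace K := isCompact_iff_compactSpace.mp hK
  -- `ℓ (t • x) = t` recovers the scalar, so the cone is a projection along the compact factor.
  have hproj : Ici (0 : ℝ) • K = Prod.fst '' {q : E × K | 0 ≤ ℓ q.1 ∧ ℓ q.1 • (q.2 : E) = q.1} := by
    ext y
    constructor
    · rintro ⟨t, ht, x, hx, rfl⟩
      exact ⟨(t • x, ⟨x, hx⟩), by simpa [hℓ x hx] using ht, rfl⟩
    · rintro ⟨⟨y, x⟩, ⟨hy, hyx⟩, rfl⟩
      exact ⟨ℓ y, hy, x, x.2, hyx⟩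
  rw [hproj]
  have hℓ₁ : Continuous fun q : E × K => ℓ q.1 := ℓ.continuous.comp continuous_fst
  exact isClosedMap_fst_of_compactSpace _ ((isClosed_le continuous_const hℓ₁).inter
    (isClosed_eq (hℓ₁.smul (continuous_subtype_val.comp continuous_snd)) continuous_fst))

theorem mem_Ici_smul_convexHull_of_forall_inner_nonneg {E : Type*} [NormedAddCommGroup E]
    [InnerProductSpace ℝ E] [FiniteDimensional ℝ E] {D : Set E} (hD : IsCompact D)
    (hDne : D.Nonempty) (ℓ : E →L[ℝ] ℝ) (hℓ : ∀ d ∈ D, ℓ d = 1) {v : E}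
    (hv : ∀ c, (∀ d ∈ D, 0 ≤ ⟪d, c⟫) → 0 ≤ ⟪v, c⟫) :
    v ∈ Ici (0 : ℝ) • convexHull ℝ D := by
  have hℓK : ∀ x ∈ convexHull ℝ D, ℓ x = 1 :=
    fun x hx => convexHull_min hℓ (convex_hyperplane ℓ.isLinear 1) hx
  let T := ConvexCone.hull ℝ (convexHull ℝ D)
  have hTK : closure (T : Set E) ⊆ Ici (0 : ℝ) • convexHull ℝ D := by
    refine closure_minimal (fun y hy => ?_) ((isCompact_convexHull hD).isClosed_Ici_smul ℓ hℓK)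
    obtain ⟨r, hr, x, hx, rfl⟩ := (ConvexCone.mem_hull_of_convex (convex_convexHull ℝ D)).1 hy
    exact ⟨r, hr.le, x, hx, rfl⟩
  have hDT : D ⊆ closure (T : Set E) :=
    (subset_convexHull ℝ D).trans (ConvexCone.subset_hull.trans subset_closure)
  by_contra hvK
  lift T.closure to ProperCone ℝ E using ⟨(hDne.mono hDT), isClosed_closure⟩ with C hC
  have hCT : ∀ x, x ∈ C ↔ x ∈ closure (T : Set E) := fun x => SetLike.ext_iff.1 hC x
  obtain ⟨c, hcC, hvc⟩ :=
    C.hyperplane_separation' (x₀ := v) fun hv' => hvK (hTK ((hCT v).1 hv'))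
  exact hvc.not_ge (hv c fun d hd => hcC d ((hCT d).2 (hDT hd)))

universe u in
theorem exists_pos_sum_smul_eq_of_mem_Ici_smul_convexHull {E : Type u} [AddCommGroup E]
    [Module ℝ E] {D : Set E} {v : E} (hv : v ∈ Ici (0 : ℝ) • convexHull ℝ D) :
    ∃ (ι : Type u) (_ : Fintype ι) (z : ι → E) (μ : ι → ℝ),
      (∀ i, z i ∈ D) ∧ (∀ i, 0 < μ i) ∧ ∑ i, μ i • z i = v := by
  obtain ⟨t, ht, x, hx, rfl⟩ := hv
  rcases (show (0 : ℝ) ≤ t from ht).eq_or_lt with rfl | ht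
  · exact ⟨PEmpty, inferInstance, PEmpty.elim, PEmpty.elim, fun i => i.elim, fun i => i.elim,
      by simp⟩
  · obtain ⟨ι, _, z, w, hzD, -, hw, -, rfl⟩ := eq_pos_convex_span_of_mem_convexHull hx
    exact ⟨ι, ‹_›, z, fun i => t * w i, fun i => hzD (mem_range_self i),
      fun i => mul_pos ht (hw i), by simp only [Finset.smul_sum, mul_smul]⟩

section TrigPoly

variable {n : ℕ} {Ω : Finset (Fin n → ℤ)}

noncomputable def trigPhase (k : Fin n → ℤ) (ξ : Fin n → ℝ) : ℝ :=
  2 * π * ∑ i, (k i : ℝ) * ξ i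

theorem trigEval_eq_sum_exp (c : {k // k ∈ Ω} → ℝ) (ξ : Fin n → ℝ) :
    trigEval Ω c ξ = ∑ k, (c k : ℂ) * Complex.exp (trigPhase k ξ * Complex.I) := by
  simp only [trigEval, trigPhase]
  push_cast
  ring_nf

theorem trigEval_re (c : {k // k ∈ Ω} → ℝ) (ξ : Fin n → ℝ) :
    (trigEval Ω c ξ).re = ∑ k, c k * Real.cos (trigPhase k ξ) := by
  simp [trigEval_eq_sum_exp, Complex.re_sum, Complex.exp_ofReal_mul_I_re,
    Complex.exp_ofReal_mul_I_im]

theorem trigEval_im (c : {k // k ∈ Ω} → ℝ) (ξ : Fin n → ℝ) :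
    (trigEval Ω c ξ).im = ∑ k, c k * Real.sin (trigPhase k ξ) := by
  simp [trigEval_eq_sum_exp, Complex.im_sum, Complex.exp_ofReal_mul_I_re,
    Complex.exp_ofReal_mul_I_im]

theorem trigPhase_neg (k : Fin n → ℤ) (ξ : Fin n → ℝ) : trigPhase (-k) ξ = -trigPhase k ξ := by
  simp [trigPhase, Finset.sum_neg_distrib]

theorem trigPhase_zero (ξ : Fin n → ℝ) : trigPhase 0 ξ = 0 := by
  simp [trigPhase]

theorem cos_trigPhase_fract (k : Fin n → ℤ) (ξ : Fin n → ℝ) :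
    Real.cos (trigPhase k fun i => Int.fract (ξ i)) = Real.cos (trigPhase k ξ) := by
  have : trigPhase k (fun i => Int.fract (ξ i))
      = trigPhase k ξ + (-∑ i, k i * ⌊ξ i⌋ : ℤ) * (2 * π) := by
    simp only [trigPhase, Int.fract, mul_sub, Finset.sum_sub_distrib]
    push_cast
    ring
  rw [this, Real.cos_add_int_mul_two_pi]

section Symmetrize

def negEquiv (hsym : ∀ k ∈ Ω, -k ∈ Ω) : {k // k ∈ Ω} ≃ {k // k ∈ Ω} :=
  (Equiv.neg _).subtypeEquiv fun k => ⟨hsym k, fun h => neg_neg k ▸ hsym (-k) h⟩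

variable (hsym : ∀ k ∈ Ω, -k ∈ Ω)

@[simp]
theorem coe_negEquiv (k : {k // k ∈ Ω}) : (negEquiv hsym k : Fin n → ℤ) = -k := rfl

@[simp]
theorem negEquiv_negEquiv (k : {k // k ∈ Ω}) : negEquiv hsym (negEquiv hsym k) = k :=
  Subtype.ext (neg_neg _)

theorem symCoeff_iff (c : {k // k ∈ Ω} → ℝ) :
    SymCoeff Ω c ↔ ∀ k, c (negEquiv hsym k) = c k :=
  ⟨fun h k => h k.1 k.2 _, fun h k hk _ => h ⟨k, hk⟩⟩

theorem sum_comp_negEquiv_mul (c : {k // k ∈ Ω} → ℝ) (F : ℝ → ℝ) (ξ : Fin n → ℝ) :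
    ∑ k, c (negEquiv hsym k) * F (trigPhase k ξ) = ∑ k, c k * F (-trigPhase k ξ) := by
  rw [← (negEquiv hsym).sum_comp]
  simp [trigPhase_neg]

noncomputable def symmetrize : ({k // k ∈ Ω} → ℝ) →ₗ[ℝ] ({k // k ∈ Ω} → ℝ) :=
  (2⁻¹ : ℝ) • (LinearMap.id + LinearMap.funLeft ℝ ℝ (negEquiv hsym))

theorem symmetrize_apply (c : {k // k ∈ Ω} → ℝ) (k : {k // k ∈ Ω}) :
    symmetrize hsym c k = 2⁻¹ * (c k + c (negEquiv hsym k)) := rfl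

theorem symCoeff_symmetrize (c : {k // k ∈ Ω} → ℝ) : SymCoeff Ω (symmetrize hsym c) := by
  rw [symCoeff_iff hsym]
  intro k
  rw [symmetrize_apply, symmetrize_apply, negEquiv_negEquiv, add_comm]

theorem symmetrize_eq_self {c : {k // k ∈ Ω} → ℝ} (hc : SymCoeff Ω c) :
    symmetrize hsym c = c := by
  ext k
  rw [symmetrize_apply, (symCoeff_iff hsym c).1 hc]
  ring

theorem trigEval_re_symmetrize (c : {k // k ∈ Ω} → ℝ) (ξ : Fin n → ℝ) :
    (trigEval Ω (symmetrize hsym c) ξ).re = (trigEval Ω c ξ).re := by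
  have h := sum_comp_negEquiv_mul hsym c Real.cos ξ
  simp only [Real.cos_neg] at h
  simp only [trigEval_re, symmetrize_apply, mul_assoc, add_mul, ← Finset.mul_sum,
    Finset.sum_add_distrib, h]
  ring

end Symmetrize

theorem trigEval_im_eq_zero (hsym : ∀ k ∈ Ω, -k ∈ Ω) {c : {k // k ∈ Ω} → ℝ}
    (hc : SymCoeff Ω c) (ξ : Fin n → ℝ) : (trigEval Ω c ξ).im = 0 := by
  have h := sum_comp_negEquiv_mul hsym c Real.sin ξ
  simp only [(symCoeff_iff hsym c).1 hc, Real.sin_neg, mul_neg, Finset.sum_neg_distrib] at h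
  rw [trigEval_im]
  linarith

theorem symmetrize_mem_posTrigCone (hsym : ∀ k ∈ Ω, -k ∈ Ω) {c : {k // k ∈ Ω} → ℝ}
    (hc : ∀ ξ, 0 ≤ (trigEval Ω c ξ).re) : symmetrize hsym c ∈ posTrigCone Ω :=
  ⟨symCoeff_symmetrize hsym c, fun ξ => ⟨trigEval_im_eq_zero hsym (symCoeff_symmetrize hsym c) ξ,
    (trigEval_re_symmetrize hsym c ξ).symm ▸ hc ξ⟩⟩

noncomputable def cosVec (Ω : Finset (Fin n → ℤ)) (ξ : Fin n → ℝ) :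
    EuclideanSpace ℝ {k // k ∈ Ω} :=
  WithLp.toLp 2 fun k => Real.cos (trigPhase k ξ)

theorem inner_cosVec (ξ : Fin n → ℝ) (c : EuclideanSpace ℝ {k // k ∈ Ω}) :
    ⟪cosVec Ω ξ, c⟫ = (trigEval Ω c.ofLp ξ).re := by
  simp [cosVec, trigEval_re, PiLp.inner_apply, mul_comm]

theorem continuous_cosVec : Continuous (cosVec Ω) := by
  unfold cosVec trigPhase
  fun_prop

theorem cosVec_fract (ξ : Fin n → ℝ) : cosVec Ω (fun i => Int.fract (ξ i)) = cosVec Ω ξ := by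
  simp only [cosVec, cos_trigPhase_fract]

theorem cosVec_apply_zero (h0 : (0 : Fin n → ℤ) ∈ Ω) (ξ : Fin n → ℝ) :
    cosVec Ω ξ ⟨0, h0⟩ = 1 := by
  simp [cosVec, trigPhase_zero]

end TrigPoly

theorem exists_eq_sum_pos_mul_trigEval_re {n : ℕ} {Ω : Finset (Fin n → ℤ)}
    (h0 : (0 : Fin n → ℤ) ∈ Ω) (hsym : ∀ k ∈ Ω, -k ∈ Ω) (f : ({k // k ∈ Ω} → ℝ) →ₗ[ℝ] ℝ)
    (hf : ∀ p ∈ posTrigCone Ω, 0 ≤ f p) :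
    ∃ (ι : Type) (_ : Fintype ι) (ξ : ι → Fin n → ℝ) (μ : ι → ℝ), (∀ i, ξ i ∈ Icc 0 1) ∧
      (∀ i, 0 < μ i) ∧ ∀ p ∈ posTrigCone Ω, f p = ∑ i, μ i * (trigEval Ω p (ξ i)).re := by
  let g : EuclideanSpace ℝ {k // k ∈ Ω} →L[ℝ] ℝ := LinearMap.toContinuousLinearMap
    (f ∘ₗ symmetrize hsym ∘ₗ (WithLp.linearEquiv 2 ℝ ({k // k ∈ Ω} → ℝ)).toLinearMap)
  let v := (InnerProductSpace.toDual ℝ _).symm g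
  have hv : ∀ c, ⟪v, c⟫ = f (symmetrize hsym c.ofLp) := fun c =>
    InnerProductSpace.toDual_symm_apply
  have hvD : v ∈ Ici (0 : ℝ) • convexHull ℝ (cosVec Ω '' Icc 0 1) := by
    refine mem_Ici_smul_convexHull_of_forall_inner_nonneg (isCompact_Icc.image continuous_cosVec)
      ((nonempty_Icc.2 zero_le_one).image _) (EuclideanSpace.proj ⟨0, h0⟩)
      (by rintro _ ⟨ξ, -, rfl⟩; exact cosVec_apply_zero h0 ξ) fun c hc => ?_
    rw [hv]
    refine hf _ (symmetrize_mem_posTrigCone hsym fun ξ => ?_)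
    rw [← inner_cosVec, ← cosVec_fract]
    exact hc _ ⟨_, ⟨fun i => Int.fract_nonneg _, fun i => (Int.fract_lt_one _).le⟩, rfl⟩
  obtain ⟨ι, _, z, μ, hz, hμ, hvz⟩ := exists_pos_sum_smul_eq_of_mem_Ici_smul_convexHull hvD
  choose ξ hξ hzξ using hz
  refine ⟨ι, ‹_›, ξ, μ, hξ, hμ, fun p hp => ?_⟩
  calc f p = ⟪v, WithLp.toLp 2 p⟫ := by rw [hv, WithLp.ofLp_toLp, symmetrize_eq_self hsym hp.1]
    _ = ∑ i, μ i * (trigEval Ω p (ξ i)).re := by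
      rw [← hvz, sum_inner]
      simp only [real_inner_smul_left, ← hzξ, inner_cosVec]

/-- every face of the cone of nonnegative trigonometric polynomials
(i.e., every intersection with a supporting hyperplane) is the set of polynomials of
the cone vanishing on a suitable compact set `S` (of representatives of points of the
torus `𝕋ⁿ`). -/
theorem stmt5 {n : ℕ} (Ω : Finset (Fin n → ℤ)) (h0 : (0 : Fin n → ℤ) ∈ Ω)
    (hsym : ∀ k ∈ Ω, -k ∈ Ω) (L : Set ({k // k ∈ Ω} → ℝ))
    (hface : ∃ f : ({k // k ∈ Ω} → ℝ) →ₗ[ℝ] ℝ, f ≠ 0 ∧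
      (∀ p ∈ posTrigCone Ω, 0 ≤ f p) ∧ L = {p ∈ posTrigCone Ω | f p = 0}) :
    ∃ S : Set (Fin n → ℝ), IsCompact S ∧ S ⊆ Set.Icc 0 1 ∧
      L = {p ∈ posTrigCone Ω | ∀ ξ ∈ S, trigEval Ω p ξ = 0} := by
  obtain ⟨f, -, hf, rfl⟩ := hface
  obtain ⟨ι, _, ξ, μ, hξ, hμ, hf_eq⟩ := exists_eq_sum_pos_mul_trigEval_re h0 hsym f hf
  refine ⟨range ξ, (finite_range ξ).isCompact, range_subset_iff.2 hξ, ?_⟩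
  ext p
  refine and_congr_right fun hp => ?_
  rw [hf_eq p hp, Finset.sum_eq_zero_iff_of_nonneg fun i _ => mul_nonneg (hμ i).le (hp.2 _).2,
    forall_mem_range]
  simp [(hμ _).ne', Complex.ext_iff, (hp.2 _).1]
end

section
/- For every linear subspace J ⊆ ℝ^n there exists a unique minimal (by inclusion) rational subspace L containing J; moreover, the union of the translates J + k over k ∈ L ∩ ℤ^n is dense in L. -/
/-- The real vector associated with an integer vector. -/
def intVec {n : ℕ} (k : Fin n → ℤ) : Fin n → ℝ := fun i => (k i : ℝ)

/-- A subspace of `ℝⁿ` is rational if it is spanned by finitely many integer vectors. -/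
def IsRationalSubspace {n : ℕ} (L : Submodule ℝ (Fin n → ℝ)) : Prop :=
  ∃ T : Finset (Fin n → ℤ), L = Submodule.span ℝ (intVec '' ↑T)

/-!
Rational subspaces are exactly the real spans of subspaces of `ℚⁿ`, and taking real spans
preserves dimension; hence rational subspaces are closed under intersection, and a rational
`L ⊇ J` of least dimension is the minimal one.

For density, let `G` be the closure of `J + (L ∩ ℤⁿ)` and `V = {x | ℝ x ⊆ G}` the largest subspace
inside `G`. A closed subgroup that is not discrete contains a line, so `G` is discrete on a
complement of `V`; hence the projection along `V` maps `L ∩ ℤⁿ` onto a discrete group. Lifting a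
`ℤ`-basis of that image shows that the integer points of `V` span `V`. So `V` is a rational
subspace containing `J`, whence `L ⊆ V ⊆ G`.
-/

open Module Submodule Filter Topology Metric

section RationalPoints

variable {ι : Type*}

variable (ι) in
noncomputable def ratVec : (ι → ℚ) →ₗ[ℚ] (ι → ℝ) := (Algebra.linearMap ℚ ℝ).compLeft ι

noncomputable def realSpan (W : Submodule ℚ (ι → ℚ)) : Submodule ℝ (ι → ℝ) :=
  span ℝ (ratVec ι '' W)

noncomputable def ratPoints (L : Submodule ℝ (ι → ℝ)) : Submodule ℚ (ι → ℚ) :=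
  (L.restrictScalars ℚ).comap (ratVec ι)

lemma gc_realSpan_ratPoints : GaloisConnection (realSpan (ι := ι)) ratPoints := fun _ _ => by
  rw [realSpan, span_le, Set.image_subset_iff]
  rfl

lemma realSpan_span (s : Set (ι → ℚ)) : realSpan (span ℚ s) = span ℝ (ratVec ι '' s) :=
  le_antisymm ((gc_realSpan_ratPoints _ _).mpr (span_le.mpr fun x hx => subset_span ⟨x, hx, rfl⟩))
    (span_mono (Set.image_mono subset_span))

variable [Finite ι]

lemma LinearIndependent.ratVec_comp {κ : Type*} {v : κ → ι → ℚ} (hv : LinearIndependent ℚ v) :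
    LinearIndependent ℝ (ratVec ι ∘ v) := by
  have h := (linearIndependent_algebraMap_comp_iff (S := ℝ)).mpr hv
  exact h

lemma finrank_realSpan (W : Submodule ℚ (ι → ℚ)) : finrank ℝ (realSpan W) = finrank ℚ W := by
  let b := Module.finBasis ℚ W
  have hli : LinearIndependent ℚ (W.subtype ∘ b) :=
    b.linearIndependent.map' W.subtype (ker_subtype W)
  have hspan : realSpan W = span ℝ (Set.range (ratVec ι ∘ W.subtype ∘ b)) := by
    rw [Set.range_comp, ← realSpan_span, Set.range_comp, ← Submodule.map_span, b.span_eq,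
      Submodule.map_top, range_subtype]
  rw [hspan, finrank_span_eq_card hli.ratVec_comp, Fintype.card_fin]

lemma realSpan_inf (W₁ W₂ : Submodule ℚ (ι → ℚ)) :
    realSpan (W₁ ⊓ W₂) = realSpan W₁ ⊓ realSpan W₂ := by
  refine eq_of_le_of_finrank_le (gc_realSpan_ratPoints.monotone_l.map_inf_le W₁ W₂) ?_
  have hℚ := Submodule.finrank_sup_add_finrank_inf_eq W₁ W₂
  have hℝ := Submodule.finrank_sup_add_finrank_inf_eq (realSpan W₁) (realSpan W₂)
  rw [← gc_realSpan_ratPoints.l_sup] at hℝ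
  simp only [finrank_realSpan] at hℝ ⊢
  omega

lemma realSpan_top : realSpan (⊤ : Submodule ℚ (ι → ℚ)) = ⊤ := by
  have := Fintype.ofFinite ι
  refine Submodule.eq_top_of_finrank_eq ?_
  rw [finrank_realSpan, finrank_top, Module.finrank_fintype_fun_eq_card,
    Module.finrank_fintype_fun_eq_card]

end RationalPoints

section RationalSubspace

variable {n : ℕ}

lemma intVec_injective : Function.Injective (intVec (n := n)) :=
  fun _ _ h => funext fun i => Int.cast_injective (congrFun h i)

lemma intVec_eq_ratVec (k : Fin n → ℤ) : intVec k = ratVec (Fin n) (Int.cast ∘ k) := by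
  ext i
  simp [intVec, ratVec]

lemma isRationalSubspace_span_of_subset_range {S : Set (Fin n → ℝ)} (hS : S ⊆ Set.range intVec) :
    IsRationalSubspace (span ℝ S) := by
  obtain ⟨t, htS, -, hspan, -⟩ := exists_finset_span_eq_linearIndepOn ℝ S
  refine ⟨t.preimage intVec intVec_injective.injOn, ?_⟩
  rw [Finset.coe_preimage, Set.image_preimage_eq_of_subset (htS.trans hS), hspan]

lemma isRationalSubspace_realSpan (W : Submodule ℚ (Fin n → ℚ)) :
    IsRationalSubspace (realSpan W) := by
  suffices h : realSpan W = span ℝ (ratVec _ '' W ∩ Set.range intVec) from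
    h ▸ isRationalSubspace_span_of_subset_range Set.inter_subset_right
  refine le_antisymm (span_le.mpr ?_) (span_mono Set.inter_subset_left)
  rintro _ ⟨x, hx, rfl⟩
  -- clear denominators: `d • x` is an integer vector for some nonzero integer `d`
  obtain ⟨d, hd⟩ := IsLocalization.exist_integer_multiples (nonZeroDivisors ℤ) Finset.univ x
  choose k hk using fun i => hd i (Finset.mem_univ i)
  have hdx : intVec k = ratVec _ ((d : ℤ) • x) := by
    rw [intVec_eq_ratVec]
    congr 1
    ext i
    simpa using hk i
  have hd0 : ((d : ℤ) : ℝ) ≠ 0 := Int.cast_ne_zero.mpr (nonZeroDivisors.coe_ne_zero d)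
  have : ratVec _ x = ((d : ℤ) : ℝ)⁻¹ • intVec k := by
    rw [hdx, map_zsmul, ← Int.cast_smul_eq_zsmul ℝ, inv_smul_smul₀ hd0]
  rw [this]
  exact smul_mem _ _ (subset_span ⟨⟨_, W.smul_of_tower_mem _ hx, hdx.symm⟩, k, rfl⟩)

lemma IsRationalSubspace.realSpan_ratPoints {L : Submodule ℝ (Fin n → ℝ)}
    (hL : IsRationalSubspace L) : realSpan (ratPoints L) = L := by
  refine le_antisymm (gc_realSpan_ratPoints.l_u_le L) ?_
  obtain ⟨T, hT⟩ := hL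
  refine hT.le.trans (span_le.mpr ?_)
  rintro _ ⟨k, hk, rfl⟩
  have hkL : intVec k ∈ L := hT ▸ subset_span ⟨k, hk, rfl⟩
  rw [intVec_eq_ratVec] at hkL ⊢
  exact subset_span ⟨_, hkL, rfl⟩

lemma IsRationalSubspace.inf {L₁ L₂ : Submodule ℝ (Fin n → ℝ)} (h₁ : IsRationalSubspace L₁)
    (h₂ : IsRationalSubspace L₂) : IsRationalSubspace (L₁ ⊓ L₂) := by
  rw [← h₁.realSpan_ratPoints, ← h₂.realSpan_ratPoints, ← realSpan_inf]
  exact isRationalSubspace_realSpan _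

lemma isRationalSubspace_top : IsRationalSubspace (⊤ : Submodule ℝ (Fin n → ℝ)) :=
  realSpan_top (ι := Fin n) ▸ isRationalSubspace_realSpan ⊤

lemma exists_minimal_isRationalSubspace (J : Submodule ℝ (Fin n → ℝ)) :
    ∃ L, IsRationalSubspace L ∧ J ≤ L ∧
      ∀ L', IsRationalSubspace L' → J ≤ L' → L ≤ L' := by
  obtain ⟨L, ⟨hL, hJL⟩, hmin⟩ := wellFounded_lt.has_min {L | IsRationalSubspace L ∧ J ≤ L}
    ⟨⊤, isRationalSubspace_top, le_top⟩
  refine ⟨L, hL, hJL, fun L' hL' hJL' => ?_⟩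
  by_contra h
  exact hmin _ ⟨hL.inf hL', le_inf hJL hJL'⟩ (inf_lt_left.mpr h)

end RationalSubspace

section ClosedSubgroup

variable {E : Type*} [NormedAddCommGroup E] [NormedSpace ℝ E]

def AddSubgroup.largestSubspace (G : AddSubgroup E) : Submodule ℝ E where
  carrier := {x | ∀ t : ℝ, t • x ∈ G}
  add_mem' hx hy t := by rw [smul_add]; exact G.add_mem (hx t) (hy t)
  zero_mem' t := by rw [smul_zero]; exact G.zero_mem
  smul_mem' c _ hx t := by rw [smul_smul]; exact hx _

namespace AddSubgroup

variable (G : AddSubgroup E)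

lemma largestSubspace_subset : (G.largestSubspace : Set E) ⊆ G :=
  fun x hx => by simpa using hx 1

lemma le_largestSubspace {W : Submodule ℝ E} (hW : (W : Set E) ⊆ G) : W ≤ G.largestSubspace :=
  fun _ hx t => hW (W.smul_mem t hx)

variable {G}

lemma smul_mem_of_tendsto (hG : IsClosed (G : Set E)) {g : ℕ → E} (hgG : ∀ k, g k ∈ G)
    (hg0 : ∀ k, g k ≠ 0) (hg : Tendsto (fun k => ‖g k‖) atTop (𝓝 0)) {u : E}
    (hu : Tendsto (fun k => ‖g k‖⁻¹ • g k) atTop (𝓝 u)) (t : ℝ) : t • u ∈ G := by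
  -- `t • u` is the limit of the multiples `round (t / ‖g k‖) • g k ∈ G`
  set a : ℕ → ℝ := fun k => round (t * ‖g k‖⁻¹) * ‖g k‖
  have ha : Tendsto a atTop (𝓝 t) := by
    have hclose : ∀ k, ‖a k - t‖ ≤ ‖g k‖ / 2 := fun k => by
      have hk : ‖g k‖ ≠ 0 := norm_ne_zero_iff.mpr (hg0 k)
      have : a k - t = (round (t * ‖g k‖⁻¹) - t * ‖g k‖⁻¹) * ‖g k‖ := by
        simp only [a]
        field_simp
      rw [this, Real.norm_eq_abs, abs_mul, abs_norm, abs_sub_comm]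
      nlinarith [abs_sub_round (t * ‖g k‖⁻¹), norm_nonneg (g k)]
    have := squeeze_zero_norm hclose (by simpa using hg.div_const 2)
    simpa using this.add_const t
  have hmem : ∀ k, a k • (‖g k‖⁻¹ • g k) ∈ G := fun k => by
    have hk : ‖g k‖ ≠ 0 := norm_ne_zero_iff.mpr (hg0 k)
    rw [smul_smul, mul_assoc, mul_inv_cancel₀ hk, mul_one, Int.cast_smul_eq_zsmul]
    exact G.zsmul_mem (hgG k) _
  exact hG.mem_of_tendsto (ha.smul hu) (Eventually.of_forall hmem)

lemma exists_ne_zero_forall_smul_mem [FiniteDimensional ℝ E] (hG : IsClosed (G : Set E))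
    (h : ∀ ε > 0, ∃ g ∈ G, g ≠ 0 ∧ ‖g‖ < ε) : ∃ u ≠ 0, ∀ t : ℝ, t • u ∈ G := by
  choose g hgG hg0 hgε using fun k : ℕ => h (1 / (k + 1)) Nat.one_div_pos_of_nat
  have hg : Tendsto (fun k => ‖g k‖) atTop (𝓝 0) :=
    squeeze_zero (fun _ => norm_nonneg _) (fun k => (hgε k).le)
      tendsto_one_div_add_atTop_nhds_zero_nat
  have hsphere : ∀ k, ‖g k‖⁻¹ • g k ∈ sphere (0 : E) 1 := fun k => by
    simp [norm_smul, inv_mul_cancel₀ (norm_ne_zero_iff.mpr (hg0 k))]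
  obtain ⟨u, hu, φ, hφ, hlim⟩ := (isCompact_sphere (0 : E) 1).tendsto_subseq hsphere
  exact ⟨u, ne_of_mem_sphere hu one_ne_zero,
    smul_mem_of_tendsto hG (fun k => hgG (φ k)) (fun k => hg0 (φ k)) (hg.comp hφ.tendsto_atTop)
      hlim⟩

lemma exists_pos_eq_zero_of_mem_isCompl_largestSubspace [FiniteDimensional ℝ E]
    (hG : IsClosed (G : Set E)) {C : Submodule ℝ E} (hC : IsCompl G.largestSubspace C) :
    ∃ ε > 0, ∀ g ∈ G, g ∈ C → ‖g‖ < ε → g = 0 := by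
  by_contra! h
  obtain ⟨u, hu0, hu⟩ := exists_ne_zero_forall_smul_mem (G := G ⊓ C.toAddSubgroup)
    (hG.inter C.closed_of_finiteDimensional) fun ε hε => by
      obtain ⟨g, hgG, hgC, hgε, hg0⟩ := h ε hε
      exact ⟨g, ⟨hgG, hgC⟩, hg0, hgε⟩
  have huV : u ∈ G.largestSubspace := fun t => (hu t).1
  have huC : u ∈ C := by simpa using (hu 1).2
  exact hu0 (Submodule.disjoint_def.mp hC.disjoint u huV huC)

end AddSubgroup

end ClosedSubgroup

section DiscreteImage

lemma Submodule.finrank_map_add_finrank_inf_ker {K E F : Type*} [DivisionRing K] [AddCommGroup E]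
    [Module K E] [AddCommGroup F] [Module K F] (P : E →ₗ[K] F) (S : Submodule K E)
    [FiniteDimensional K S] :
    finrank K (S.map P) + finrank K (S ⊓ LinearMap.ker P : Submodule K E) = finrank K S := by
  have := LinearMap.finrank_range_add_finrank_ker (P.domRestrict S)
  rwa [LinearMap.range_domRestrict, LinearMap.ker_domRestrict, ← finrank_map_subtype_eq,
    map_comap_subtype] at this

lemma AddSubgroup.span_le_span_range_sup_span_inf_ker {R E F ι : Type*} [Ring R] [AddCommGroup E]
    [Module R E] [AddCommGroup F] [Module R F] [Fintype ι] (Λ : AddSubgroup E) (P : E →ₗ[R] F)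
    (δ : ι → E) (hδ : ∀ i, δ i ∈ Λ) (hP : ∀ x ∈ Λ, P x ∈ span ℤ (Set.range (P ∘ δ))) :
    span R (Λ : Set E) ≤ span R (Set.range δ) ⊔
      span R ((Λ ⊓ (LinearMap.ker P).toAddSubgroup : AddSubgroup E) : Set E) := by
  refine span_le.mpr fun x hx => ?_
  obtain ⟨c, hc⟩ := (mem_span_range_iff_exists_fun ℤ).mp (hP x hx)
  have hrest : x - ∑ i, c i • δ i ∈ Λ ⊓ (LinearMap.ker P).toAddSubgroup :=
    ⟨Λ.sub_mem hx (Λ.sum_mem fun i _ => Λ.zsmul_mem (hδ i) _), by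
      simp [map_sub, map_sum, map_zsmul, ← hc]⟩
  rw [SetLike.mem_coe, ← add_sub_cancel (∑ i, c i • δ i) x]
  exact Submodule.add_mem_sup (sum_mem fun i _ => zsmul_mem (subset_span (Set.mem_range_self i)) _)
    (subset_span hrest)

variable {E F : Type*} [NormedAddCommGroup E] [NormedSpace ℝ E] [FiniteDimensional ℝ E]
  [NormedAddCommGroup F] [NormedSpace ℝ F] [FiniteDimensional ℝ F]

lemma AddSubgroup.span_inf_ker_eq_of_discrete (Λ : AddSubgroup E) (P : E →ₗ[ℝ] F) {ε : ℝ}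
    (hε : 0 < ε) (hdisc : ∀ x ∈ Λ, ‖P x‖ < ε → P x = 0) :
    span ℝ ((Λ ⊓ (LinearMap.ker P).toAddSubgroup : AddSubgroup E) : Set E) =
      span ℝ (Λ : Set E) ⊓ LinearMap.ker P := by
  set Γ : Submodule ℤ F := (Λ.map P.toAddMonoidHom).toIntSubmodule
  have hΓ : (Γ : Set F) = P '' Λ := rfl
  have : DiscreteTopology Γ := by
    rw [discreteTopology_iff_isOpen_singleton_zero, isOpen_induced_iff]
    refine ⟨Metric.ball 0 ε, Metric.isOpen_ball, ?_⟩
    ext ⟨_, x, hx, rfl⟩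
    simp only [Set.mem_preimage, mem_ball_zero_iff, Set.mem_singleton_iff]
    refine ⟨fun h => Subtype.ext (hdisc x hx h), fun h => ?_⟩
    rw [Subtype.ext_iff] at h
    simp_all
  let b := Module.Free.chooseBasis ℤ Γ
  have hcard : Fintype.card (Module.Free.ChooseBasisIndex ℤ Γ) =
      finrank ℝ ((span ℝ (Λ : Set E)).map P) := by
    calc _ = finrank ℤ Γ := (finrank_eq_card_chooseBasisIndex ℤ Γ).symm
      _ = Set.finrank ℤ (Γ : Set F) := by rw [Set.finrank, span_eq]
      _ = Set.finrank ℝ (Γ : Set F) :=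
        (Real.finrank_eq_int_finrank_of_discrete (by rwa [span_eq])).symm
      _ = _ := by rw [Set.finrank, hΓ, map_span]
  choose δ hδΛ hδ using fun i => (show (b i : F) ∈ P '' Λ from (b i).2)
  have hP : ∀ x ∈ Λ, P x ∈ span ℤ (Set.range (P ∘ δ)) := fun x hx => by
    have hx' : P x ∈ Γ := ⟨x, hx, rfl⟩
    refine (mem_span_range_iff_exists_fun ℤ).mpr ⟨b.repr ⟨P x, hx'⟩, ?_⟩
    simpa only [Function.comp_apply, hδ, Submodule.coe_sum, Submodule.coe_smul_of_tower] using
      congrArg Subtype.val (b.sum_repr ⟨P x, hx'⟩)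
  have hspan : span ℝ (Λ : Set E) ≤ _ := Λ.span_le_span_range_sup_span_inf_ker P δ hδΛ hP
  have hle : span ℝ ((Λ ⊓ (LinearMap.ker P).toAddSubgroup : AddSubgroup E) : Set E) ≤
      span ℝ (Λ : Set E) ⊓ LinearMap.ker P :=
    le_inf (span_mono inf_le_left) (span_le.mpr fun x hx => hx.2)
  refine eq_of_le_of_finrank_le hle ?_
  have hrank := (span ℝ (Λ : Set E)).finrank_map_add_finrank_inf_ker P
  have := (finrank_mono hspan).trans (finrank_add_le_finrank_add_finrank _ _)
  have := finrank_range_le_card (R := ℝ) δ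
  rw [Set.finrank] at this
  omega

end DiscreteImage

section LatticePoints

variable {n : ℕ}

def latticePoints (L : Submodule ℝ (Fin n → ℝ)) : AddSubgroup (Fin n → ℝ) :=
  L.toAddSubgroup ⊓ ((Int.castAddHom ℝ).compLeft (Fin n)).range

lemma mem_latticePoints {L : Submodule ℝ (Fin n → ℝ)} {x : Fin n → ℝ} :
    x ∈ latticePoints L ↔ x ∈ L ∧ ∃ k, intVec k = x :=
  Iff.rfl

lemma latticePoints_subset_range (L : Submodule ℝ (Fin n → ℝ)) :
    (latticePoints L : Set (Fin n → ℝ)) ⊆ Set.range intVec :=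
  fun _ hx => (mem_latticePoints.mp hx).2

lemma latticePoints_inf_of_le {V L : Submodule ℝ (Fin n → ℝ)} (hVL : V ≤ L) :
    latticePoints L ⊓ V.toAddSubgroup = latticePoints V := by
  ext x
  simp only [AddSubgroup.mem_inf, mem_latticePoints, Submodule.mem_toAddSubgroup]
  exact ⟨fun ⟨⟨_, hk⟩, hxV⟩ => ⟨hxV, hk⟩, fun ⟨hxV, hk⟩ => ⟨⟨hVL hxV, hk⟩, hxV⟩⟩

lemma IsRationalSubspace.span_latticePoints {L : Submodule ℝ (Fin n → ℝ)}
    (hL : IsRationalSubspace L) : span ℝ (latticePoints L : Set (Fin n → ℝ)) = L := by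
  refine le_antisymm (span_le.mpr fun x hx => (mem_latticePoints.mp hx).1) ?_
  obtain ⟨T, hT⟩ := hL
  refine hT.le.trans (span_mono ?_)
  rintro _ ⟨k, hk, rfl⟩
  exact mem_latticePoints.mpr ⟨hT ▸ subset_span ⟨k, hk, rfl⟩, k, rfl⟩

lemma coe_toAddSubgroup_sup_latticePoints (J L : Submodule ℝ (Fin n → ℝ)) :
    ((J.toAddSubgroup ⊔ latticePoints L : AddSubgroup (Fin n → ℝ)) : Set (Fin n → ℝ)) =
      ⋃ (k : Fin n → ℤ) (_ : intVec k ∈ L), (fun x => x + intVec k) '' (J : Set (Fin n → ℝ)) := by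
  ext x
  simp only [SetLike.mem_coe, AddSubgroup.mem_sup, Submodule.mem_toAddSubgroup, mem_latticePoints,
    Set.mem_iUnion, Set.mem_image]
  constructor
  · rintro ⟨y, hy, _, ⟨hkL, k, rfl⟩, rfl⟩
    exact ⟨k, hkL, y, hy, rfl⟩
  · rintro ⟨k, hkL, y, hy, rfl⟩
    exact ⟨y, hy, _, ⟨hkL, k, rfl⟩, rfl⟩

lemma subset_topologicalClosure_of_minimal {J L : Submodule ℝ (Fin n → ℝ)}
    (hL : IsRationalSubspace L) (hJL : J ≤ L)
    (hmin : ∀ L', IsRationalSubspace L' → J ≤ L' → L ≤ L') :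
    (L : Set (Fin n → ℝ)) ⊆ (J.toAddSubgroup ⊔ latticePoints L).topologicalClosure := by
  set G := (J.toAddSubgroup ⊔ latticePoints L).topologicalClosure
  set V := G.largestSubspace
  have hG : IsClosed (G : Set (Fin n → ℝ)) := AddSubgroup.isClosed_topologicalClosure _
  have hGL : G ≤ L.toAddSubgroup :=
    AddSubgroup.topologicalClosure_minimal _
      (sup_le (Submodule.toAddSubgroup_mono hJL) inf_le_left) L.closed_of_finiteDimensional
  have hΛG : latticePoints L ≤ G := le_sup_right.trans (AddSubgroup.le_topologicalClosure _)
  have hJV : J ≤ V := G.le_largestSubspace fun x hx =>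
    AddSubgroup.le_topologicalClosure _ (AddSubgroup.mem_sup_left hx)
  have hVL : V ≤ L := fun x hx => hGL (G.largestSubspace_subset hx)
  suffices hV : IsRationalSubspace V from fun x hx => G.largestSubspace_subset (hmin V hV hJV hx)
  obtain ⟨C, hC⟩ := V.exists_isCompl
  obtain ⟨ε, hε, hGC⟩ := G.exists_pos_eq_zero_of_mem_isCompl_largestSubspace hG hC
  set Q := C.projection V hC.symm
  have hdisc : ∀ x ∈ latticePoints L, ‖Q x‖ < ε → Q x = 0 := fun x hx hQx => by
    refine hGC _ ?_ (projection_apply_mem _ _) hQx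
    have := G.sub_mem (hΛG hx) (G.largestSubspace_subset (sub_projection_mem hC.symm x))
    rwa [sub_sub_cancel] at this
  have hspan := (latticePoints L).span_inf_ker_eq_of_discrete Q hε hdisc
  rw [ker_projection, hL.span_latticePoints, inf_of_le_right hVL, latticePoints_inf_of_le hVL]
    at hspan
  exact hspan ▸ isRationalSubspace_span_of_subset_range (latticePoints_subset_range V)

end LatticePoints

/-- every subspace `J ⊆ ℝⁿ` has a unique minimal rational subspace `L`
containing it, and the union of translates `J + k`, `k ∈ L ∩ ℤⁿ`, is dense in `L`. -/
theorem stmt7 {n : ℕ} (J : Submodule ℝ (Fin n → ℝ)) :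
    ∃ L : Submodule ℝ (Fin n → ℝ),
      (IsRationalSubspace L ∧ J ≤ L ∧
        ∀ L' : Submodule ℝ (Fin n → ℝ), IsRationalSubspace L' → J ≤ L' → L ≤ L') ∧
      (∀ L' : Submodule ℝ (Fin n → ℝ),
        (IsRationalSubspace L' ∧ J ≤ L' ∧
          ∀ L'' : Submodule ℝ (Fin n → ℝ), IsRationalSubspace L'' → J ≤ L'' → L' ≤ L'') →
        L' = L) ∧
      (L : Set (Fin n → ℝ)) ⊆
        closure (⋃ (k : Fin n → ℤ) (_ : intVec k ∈ L), (fun x => x + intVec k) '' (J : Set (Fin n → ℝ))) := by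
  obtain ⟨L, hL, hJL, hmin⟩ := exists_minimal_isRationalSubspace J
  refine ⟨L, ⟨hL, hJL, hmin⟩, fun L' ⟨hL', hJL', hmin'⟩ =>
    le_antisymm (hmin' L hL hJL) (hmin L' hL' hJL'), ?_⟩
  rw [← coe_toAddSubgroup_sup_latticePoints, ← AddSubgroup.topologicalClosure_coe]
  exact subset_topologicalClosure_of_minimal hL hJL hmin
end
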